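/- Let C be a graded strongly classical 2-absorbing second submodule of M and let I = ⊕_{β∈G} I_β and J = ⊕_{γ∈G} J_γ be graded ideals of R. Then for every r ∈ h(R), every β, γ ∈ G, and every graded submodule N of M with r·I_β·J_γ·C ⊆ N, either r·I_β·C ⊆ N or r·J_γ·C ⊆ N or I_β·J_γ·C ⊆ N. -/

import Mathlib

open Pointwise

section GradedDefs

variable {G : Type*} [Group G] [DecidableEq G] {R : Type*} [CommRing R]
  {M : Type*} [AddCommGroup M] [Module R M]

/-- `R` is a `G`-graded commutative ring via the additive subgroups `𝒜 α`:
`R_α R_β ⊆ R_{αβ}` and `R = ⊕_{α ∈ G} R_α`. -/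
structure IsRingGrading (𝒜 : G → AddSubgroup R) : Prop where
  one_mem : (1 : R) ∈ 𝒜 1
  mul_mem : ∀ ⦃α β : G⦄ ⦃r s : R⦄, r ∈ 𝒜 α → s ∈ 𝒜 β → r * s ∈ 𝒜 (α * β)
  isInternal : DirectSum.IsInternal 𝒜

/-- `M` is a graded module over the `G`-graded ring `R`:
`R_α M_β ⊆ M_{αβ}` and `M = ⊕_{α ∈ G} M_α`. -/
structure IsModuleGrading (𝒜 : G → AddSubgroup R) (ℳ : G → AddSubgroup M) : Prop where
  smul_mem : ∀ ⦃α β : G⦄ ⦃r : R⦄ ⦃m : M⦄, r ∈ 𝒜 α → m ∈ ℳ β → r • m ∈ ℳ (α * β)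
  isInternal : DirectSum.IsInternal ℳ

/-- A submodule `N` of `M` is a graded submodule iff `N = ⊕_{α ∈ G} (N ∩ M_α)`,
equivalently, every element of `N` is a sum of homogeneous elements of `N`. -/
def IsGradedSubmodule (ℳ : G → AddSubgroup M) (N : Submodule R M) : Prop :=
  ∀ n ∈ N, n ∈ Submodule.span R {m : M | m ∈ N ∧ ∃ α, m ∈ ℳ α}

/-- An ideal `I` of `R` is a graded ideal iff `I = ⊕_{α ∈ G} (I ∩ R_α)`. -/
def IsGradedIdeal (𝒜 : G → AddSubgroup R) (I : Ideal R) : Prop :=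
  ∀ r ∈ I, r ∈ Ideal.span {s : R | s ∈ I ∧ ∃ α, s ∈ 𝒜 α}

/-- A proper graded submodule `C` of `M` is completely graded irreducible if whenever
`C = ⋂_{λ ∈ Δ} C_λ` for a family of graded submodules `C_λ`, then `C = C_β` for some `β`. -/
def CompletelyGradedIrreducible (ℳ : G → AddSubgroup M) (C : Submodule R M) : Prop :=
  IsGradedSubmodule ℳ C ∧ C ≠ ⊤ ∧
    ∀ S : Set (Submodule R M), (∀ D ∈ S, IsGradedSubmodule ℳ D) → C = sInf S → C ∈ S

/-- A non-zero graded submodule `C` of `M` is a graded classical 2-absorbing second submodule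
if whenever `r, s, t ∈ h(R)`, `U` is a completely graded irreducible submodule of `M` and
`r·s·t·C ⊆ U`, then `r·s·C ⊆ U` or `s·t·C ⊆ U` or `r·t·C ⊆ U`. -/
def IsGrClassical2AbsorbingSecond (𝒜 : G → AddSubgroup R) (ℳ : G → AddSubgroup M)
    (C : Submodule R M) : Prop :=
  C ≠ ⊥ ∧ IsGradedSubmodule ℳ C ∧
    ∀ r s t : R, (∃ α, r ∈ 𝒜 α) → (∃ β, s ∈ 𝒜 β) → (∃ γ, t ∈ 𝒜 γ) →
      ∀ U : Submodule R M, CompletelyGradedIrreducible ℳ U →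
        r • s • t • C ≤ U → (r • s • C ≤ U ∨ s • t • C ≤ U ∨ r • t • C ≤ U)

/-- A non-zero graded submodule `C` of `M` is a graded strongly classical 2-absorbing second
submodule if whenever `r, s, t ∈ h(R)`, `U₁, U₂, U₃` are completely graded irreducible
submodules of `M` and `r·s·t·C ⊆ U₁ ∩ U₂ ∩ U₃`, then `r·s·C ⊆ U₁ ∩ U₂ ∩ U₃` or
`s·t·C ⊆ U₁ ∩ U₂ ∩ U₃` or `r·t·C ⊆ U₁ ∩ U₂ ∩ U₃`. -/
def IsGrStronglyClassical2AbsorbingSecond (𝒜 : G → AddSubgroup R) (ℳ : G → AddSubgroup M)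
    (C : Submodule R M) : Prop :=
  C ≠ ⊥ ∧ IsGradedSubmodule ℳ C ∧
    ∀ r s t : R, (∃ α, r ∈ 𝒜 α) → (∃ β, s ∈ 𝒜 β) → (∃ γ, t ∈ 𝒜 γ) →
      ∀ U₁ U₂ U₃ : Submodule R M, CompletelyGradedIrreducible ℳ U₁ →
        CompletelyGradedIrreducible ℳ U₂ → CompletelyGradedIrreducible ℳ U₃ →
        r • s • t • C ≤ U₁ ⊓ U₂ ⊓ U₃ →
        (r • s • C ≤ U₁ ⊓ U₂ ⊓ U₃ ∨ s • t • C ≤ U₁ ⊓ U₂ ⊓ U₃ ∨ r • t • C ≤ U₁ ⊓ U₂ ⊓ U₃)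

/-- A non-zero graded submodule `S` of `M` is a graded weakly second submodule if whenever
`r, s ∈ h(R)`, `N` is a graded submodule of `M` and `r·s·S ⊆ N`, then `r·S ⊆ N` or `s·S ⊆ N`. -/
def IsGrWeaklySecond (𝒜 : G → AddSubgroup R) (ℳ : G → AddSubgroup M)
    (S : Submodule R M) : Prop :=
  S ≠ ⊥ ∧ IsGradedSubmodule ℳ S ∧
    ∀ r s : R, (∃ α, r ∈ 𝒜 α) → (∃ β, s ∈ 𝒜 β) →
      ∀ N : Submodule R M, IsGradedSubmodule ℳ N →
        r • s • S ≤ N → (r • S ≤ N ∨ s • S ≤ N)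

/-- A proper graded ideal `I` of `R` is a graded 2-absorbing ideal if whenever `r, s, t ∈ h(R)`
with `r·s·t ∈ I`, then `r·s ∈ I` or `r·t ∈ I` or `s·t ∈ I`. -/
def IsGr2AbsorbingIdeal (𝒜 : G → AddSubgroup R) (I : Ideal R) : Prop :=
  I ≠ ⊤ ∧ IsGradedIdeal 𝒜 I ∧
    ∀ r s t : R, (∃ α, r ∈ 𝒜 α) → (∃ β, s ∈ 𝒜 β) → (∃ γ, t ∈ 𝒜 γ) →
      r * s * t ∈ I → (r * s ∈ I ∨ r * t ∈ I ∨ s * t ∈ I)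

end GradedDefs

/-!
The colon ideal `K = (N : C)` is 2-absorbing on homogeneous elements: if `rst ∈ K` but
`rs, st, rt ∉ K`, each of the three failures is witnessed by an element outside `N`, which Zorn's
lemma separates from `N` by a completely graded irreducible submodule, and the strongly classical
2-absorbing property applied to these three submodules gives a contradiction. Passing from single
elements to the components `I_β`, `J_γ` is the usual argument that an additive group is not the
union of two proper subgroups.
-/

namespace AddSubgroup

variable {R : Type*} [NonUnitalNonAssocRing R] {K A B : AddSubgroup R} {r : R}

theorem forall_mul_mem_of_mul_notMem
    (h : ∀ a ∈ A, ∀ b ∈ B, r * a ∈ K ∨ a * b ∈ K ∨ r * b ∈ K)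
    {a : R} (ha : a ∈ A) (hra : r * a ∉ K) {b₀ : R} (hb₀ : b₀ ∈ B) (hrb₀ : r * b₀ ∉ K) :
    ∀ b ∈ B, a * b ∈ K := by
  have of_notMem : ∀ b ∈ B, r * b ∉ K → a * b ∈ K := fun b hb hrb =>
    ((h a ha b hb).resolve_left hra).resolve_right hrb
  intro b hb
  by_cases hrb : r * b ∈ K
  · have hrb' : r * (b + b₀) ∉ K := fun hsum => hrb₀ (by simpa [mul_add] using K.sub_mem hsum hrb)
    simpa [mul_add] using K.sub_mem (of_notMem _ (B.add_mem hb hb₀) hrb') (of_notMem b₀ hb₀ hrb₀)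
  · exact of_notMem b hb hrb

theorem forall_mul_mem_or_of_forall_mul_mem_or
    (h : ∀ a ∈ A, ∀ b ∈ B, r * a ∈ K ∨ a * b ∈ K ∨ r * b ∈ K) :
    (∀ a ∈ A, r * a ∈ K) ∨ (∀ b ∈ B, r * b ∈ K) ∨ ∀ a ∈ A, ∀ b ∈ B, a * b ∈ K := by
  by_contra! ⟨⟨a₀, ha₀, hra₀⟩, ⟨b₀, hb₀, hrb₀⟩, ⟨a, ha, b, hb, hab⟩⟩
  refine hab ?_
  by_cases hra : r * a ∈ K
  · have hra' : r * (a + a₀) ∉ K := fun hsum => hra₀ (by simpa [mul_add] using K.sub_mem hsum hra)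
    simpa [add_mul] using K.sub_mem
      (forall_mul_mem_of_mul_notMem h (A.add_mem ha ha₀) hra' hb₀ hrb₀ b hb)
      (forall_mul_mem_of_mul_notMem h ha₀ hra₀ hb₀ hrb₀ b hb)
  · exact forall_mul_mem_of_mul_notMem h ha hra hb₀ hrb₀ b hb

end AddSubgroup

section Graded

variable {ι R M : Type*} [CommRing R] [AddCommGroup M] [Module R M] {ℳ : ι → AddSubgroup M}

theorem isGradedSubmodule_sSup {S : Set (Submodule R M)} (hS : ∀ D ∈ S, IsGradedSubmodule ℳ D) :
    IsGradedSubmodule ℳ (sSup S) := by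
  have : sSup S ≤ Submodule.span R {m | m ∈ sSup S ∧ ∃ α, m ∈ ℳ α} :=
    sSup_le fun D hD x hx => Submodule.span_mono
      (Set.ofPred_subset_ofPred.mpr fun _ hm => ⟨le_sSup hD hm.1, hm.2⟩) (hS D hD x hx)
  exact fun n hn => this hn

theorem completelyGradedIrreducible_of_maximal {U : Submodule R M} {m : M}
    (hU : Maximal (fun P => IsGradedSubmodule ℳ P ∧ m ∉ P) U) :
    CompletelyGradedIrreducible ℳ U := by
  refine ⟨hU.prop.1, fun htop => hU.prop.2 (htop ▸ Submodule.mem_top), fun S hS hUS => ?_⟩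
  obtain ⟨D, hDS, hmD⟩ : ∃ D ∈ S, m ∉ D := by
    by_contra! hall
    exact hU.prop.2 (hUS ▸ Submodule.mem_sInf.mpr hall)
  have hUD : U ≤ D := hUS ▸ sInf_le hDS
  exact (le_antisymm (hU.2 ⟨hS D hDS, hmD⟩ hUD) hUD).symm ▸ hDS

theorem exists_completelyGradedIrreducible_of_notMem {N : Submodule R M}
    (hN : IsGradedSubmodule ℳ N) {m : M} (hm : m ∉ N) :
    ∃ U : Submodule R M, CompletelyGradedIrreducible ℳ U ∧ N ≤ U ∧ m ∉ U := by
  have hchain : ∀ c ⊆ {P : Submodule R M | IsGradedSubmodule ℳ P ∧ m ∉ P}, IsChain (· ≤ ·) c →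
      ∀ P ∈ c, ∃ ub ∈ {P : Submodule R M | IsGradedSubmodule ℳ P ∧ m ∉ P}, ∀ D ∈ c, D ≤ ub := by
    refine fun c hc hchain P hP => ⟨sSup c, ⟨isGradedSubmodule_sSup fun D hD => (hc hD).1, ?_⟩,
      fun _ => le_sSup⟩
    rw [Submodule.mem_sSup_of_directed ⟨P, hP⟩ hchain.directedOn]
    exact fun ⟨D, hD, hmD⟩ => (hc hD).2 hmD
  obtain ⟨U, hNU, hU⟩ := zorn_le_nonempty₀ _ hchain N ⟨hN, hm⟩
  exact ⟨U, completelyGradedIrreducible_of_maximal hU, hNU, hU.prop.2⟩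

theorem IsGrStronglyClassical2AbsorbingSecond.mul_mem_colon_or {𝒜 : ι → AddSubgroup R}
    {C : Submodule R M} (hC : IsGrStronglyClassical2AbsorbingSecond 𝒜 ℳ C) {r s t : R}
    (hr : ∃ α, r ∈ 𝒜 α) (hs : ∃ α, s ∈ 𝒜 α) (ht : ∃ α, t ∈ 𝒜 α)
    {N : Submodule R M} (hN : IsGradedSubmodule ℳ N) (hrst : r * s * t ∈ N.colon C) :
    r * s ∈ N.colon C ∨ s * t ∈ N.colon C ∨ r * t ∈ N.colon C := by
  have separate : ∀ x ∉ N.colon C, ∃ U : Submodule R M,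
      CompletelyGradedIrreducible ℳ U ∧ N ≤ U ∧ x ∉ U.colon C := by
    intro x hx
    obtain ⟨m, hm, hxm⟩ : ∃ m ∈ C, x • m ∉ N := by simpa [Submodule.mem_colon] using hx
    obtain ⟨U, hU, hNU, hxmU⟩ := exists_completelyGradedIrreducible_of_notMem hN hxm
    exact ⟨U, hU, hNU, fun hxU => hxmU (Submodule.mem_colon.mp hxU m hm)⟩
  by_contra! ⟨h₁, h₂, h₃⟩
  obtain ⟨U₁, hU₁, hNU₁, hU₁rs⟩ := separate _ h₁
  obtain ⟨U₂, hU₂, hNU₂, hU₂st⟩ := separate _ h₂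
  obtain ⟨U₃, hU₃, hNU₃, hU₃rt⟩ := separate _ h₃
  have hle : r • s • t • C ≤ U₁ ⊓ U₂ ⊓ U₃ := by
    rw [← mul_smul, ← mul_smul, ← Submodule.mem_colon_iff_le]
    exact Submodule.colon_mono (le_inf (le_inf hNU₁ hNU₂) hNU₃) subset_rfl hrst
  have habs := hC.2.2 r s t hr hs ht U₁ U₂ U₃ hU₁ hU₂ hU₃ hle
  simp only [← mul_smul, ← Submodule.mem_colon_iff_le, Submodule.inf_colon, Submodule.mem_inf]
    at habs
  rcases habs with h | h | h
  · exact hU₁rs h.1.1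
  · exact hU₂st h.1.2
  · exact hU₃rt h.2

end Graded

theorem stmt11_general {G : Type*} {R : Type*} [CommRing R]
    {M : Type*} [AddCommGroup M] [Module R M]
    (𝒜 : G → AddSubgroup R) (ℳ : G → AddSubgroup M)
    (C : Submodule R M) (hC : IsGrStronglyClassical2AbsorbingSecond 𝒜 ℳ C)
    (I J : Ideal R)
    (r : R) (hr : ∃ α, r ∈ 𝒜 α) (β γ : G)
    (N : Submodule R M) (hN : IsGradedSubmodule ℳ N)
    (hsub : ∀ a b : R, a ∈ I → a ∈ 𝒜 β → b ∈ J → b ∈ 𝒜 γ → r • a • b • C ≤ N) :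
    (∀ a : R, a ∈ I → a ∈ 𝒜 β → r • a • C ≤ N) ∨
      (∀ b : R, b ∈ J → b ∈ 𝒜 γ → r • b • C ≤ N) ∨
      (∀ a b : R, a ∈ I → a ∈ 𝒜 β → b ∈ J → b ∈ 𝒜 γ → a • b • C ≤ N) := by
  simp only [← mul_smul, ← mul_assoc, ← Submodule.mem_colon_iff_le] at hsub ⊢
  have hcolon := AddSubgroup.forall_mul_mem_or_of_forall_mul_mem_or
    (K := (N.colon C).toAddSubgroup) (A := I.toAddSubgroup ⊓ 𝒜 β) (B := J.toAddSubgroup ⊓ 𝒜 γ)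
    fun a ha b hb => hC.mul_mem_colon_or hr ⟨β, ha.2⟩ ⟨γ, hb.2⟩ hN (hsub a b ha.1 ha.2 hb.1 hb.2)
  rcases hcolon with h | h | h
  · exact Or.inl fun a ha haβ => h a ⟨ha, haβ⟩
  · exact Or.inr (Or.inl fun b hb hbγ => h b ⟨hb, hbγ⟩)
  · exact Or.inr (Or.inr fun a b ha haβ hb hbγ => h a ⟨ha, haβ⟩ b ⟨hb, hbγ⟩)

theorem stmt11 {G : Type*} [Group G] [DecidableEq G] {R : Type*} [CommRing R]
    {M : Type*} [AddCommGroup M] [Module R M]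
    (𝒜 : G → AddSubgroup R) (ℳ : G → AddSubgroup M)
    (h𝒜 : IsRingGrading 𝒜) (hℳ : IsModuleGrading 𝒜 ℳ)
    (C : Submodule R M) (hC : IsGrStronglyClassical2AbsorbingSecond 𝒜 ℳ C)
    (I J : Ideal R) (hI : IsGradedIdeal 𝒜 I) (hJ : IsGradedIdeal 𝒜 J)
    (r : R) (hr : ∃ α, r ∈ 𝒜 α) (β γ : G)
    (N : Submodule R M) (hN : IsGradedSubmodule ℳ N)
    (hsub : ∀ a b : R, a ∈ I → a ∈ 𝒜 β → b ∈ J → b ∈ 𝒜 γ → r • a • b • C ≤ N) :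
    (∀ a : R, a ∈ I → a ∈ 𝒜 β → r • a • C ≤ N) ∨
      (∀ b : R, b ∈ J → b ∈ 𝒜 γ → r • b • C ≤ N) ∨
      (∀ a b : R, a ∈ I → a ∈ 𝒜 β → b ∈ J → b ∈ 𝒜 γ → a • b • C ≤ N) :=
  stmt11_general 𝒜 ℳ C hC I J r hr β γ N hN hsub
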